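/- Let α ∈ (1/2, 1) be a constant. There is n₀ ∈ ℕ such that for all n ≥ n₀ and all reals ε with 2^{−(2α−1)n/2} ≤ ε ≤ 1/6: every deterministic non-adaptive SSEQ algorithm (h, ℓ) with advantage at least 2/3 satisfies ‖ℓ‖₁ > n^{3/2} / (ε · (log₂ n)³ · (log₂(n/ε))²). -/

import Mathlib

open Finset

/-- Probability that the SSEQ oracle, on hidden set `A ⊆ [m]` and element queries
`ℓ = (ℓ_1, …, ℓ_m)`, returns the response `b ∈ {0,1}^m`: entries are independent,
`b_i = 0` if `i ∉ A`, and `b_i = 1` with probability `λ(ℓ_i) = 1 - (1 - ρ)^{ℓ_i}`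
if `i ∈ A`. -/
noncomputable def sseqRespP {m : ℕ} (ℓ : Fin m → ℕ) (ρ : ℝ)
    (A : Finset (Fin m)) (b : Fin m → Bool) : ℝ :=
  ∏ i : Fin m,
    if i ∈ A then (if b i then 1 - (1 - ρ) ^ (ℓ i) else (1 - ρ) ^ (ℓ i))
    else (if b i then 0 else 1)

/-- Probability that the deterministic non-adaptive SSEQ algorithm `(h, ℓ)` answers
"yes" (`true`) when the hidden set `A ⊆ [m]` is drawn by including each element of `[m]`
independently with probability `pr`. -/
noncomputable def sseqYesP (m : ℕ) (ℓ : Fin m → ℕ) (ρ pr : ℝ)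
    (h : (Fin m → Bool) → Bool) : ℝ :=
  ∑ A : Finset (Fin m), (pr ^ A.card * (1 - pr) ^ (m - A.card)) *
    ∑ b : Fin m → Bool, (if h b then 1 else 0) * sseqRespP ℓ ρ A b

/-- The advantage of the SSEQ algorithm `(h, ℓ)` with parameters `n`, `m`, `ε`. -/
noncomputable def sseqAdv (n m : ℕ) (ℓ : Fin m → ℕ) (ε : ℝ)
    (h : (Fin m → Bool) → Bool) : ℝ :=
  sseqYesP m ℓ (ε / Real.sqrt n) (1 / 2) h -
    sseqYesP m ℓ (ε / Real.sqrt n) (1 / 2 + Real.logb 2 n / Real.sqrt n) h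

/-!
Averaging over the hidden set, the oracle's answer under inclusion probability `p` is a product of
independent Bernoulli bits with parameters `p λ(ℓᵢ)`. The advantage is at most the ℓ¹ distance
between the two product laws (`p = 1/2` versus `p = 1/2 + η`, `η = log₂ n / √n`), which by
Cauchy–Schwarz is at most the square root of their χ²-divergence. The χ²-divergence tensorizes,
and each factor is at most `1 + 8η²λ(ℓᵢ) ≤ exp (8η²ρℓᵢ)` with `ρ = ε / √n`. So an advantage of
`2/3` forces `8η²ρ‖ℓ‖₁ > 1/8`, i.e. `‖ℓ‖₁ ≳ n^{3/2} / (ε log₂² n)`, well above the claimed bound.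
-/

open Real

section BernoulliProduct

variable {ι : Type*} [Fintype ι]

theorem Fintype.sum_bool_pi_prod [DecidableEq ι] {R : Type*} [CommSemiring R] (f : ι → Bool → R) :
    ∑ b : ι → Bool, ∏ i, f i (b i) = ∏ i, (f i true + f i false) := by
  rw [← Fintype.prod_sum]
  simp only [Fintype.sum_bool]

theorem Fintype.sum_finset_prod_ite_mem [DecidableEq ι] {R : Type*} [CommSemiring R] (f g : ι → R) :
    ∑ A : Finset ι, ∏ i, (if i ∈ A then f i else g i) = ∏ i, (f i + g i) := by
  rw [Fintype.prod_add]
  refine Finset.sum_congr rfl fun A _ => ?_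
  rw [prod_ite, filter_mem_eq_inter, univ_inter, filter_not, filter_mem_eq_inter, univ_inter,
    ← compl_eq_univ_sdiff]

theorem pow_card_mul_pow_card_sub_eq_prod [DecidableEq ι] {M : Type*} [CommMonoid M] (a b : M)
    (A : Finset ι) :
    a ^ #A * b ^ (Fintype.card ι - #A) = ∏ i, if i ∈ A then a else b := by
  rw [prod_ite, prod_const, prod_const, filter_mem_eq_inter, univ_inter, filter_not,
    filter_mem_eq_inter, univ_inter, card_sdiff_of_subset (subset_univ A), card_univ]

noncomputable def bernoulliProd (x : ι → ℝ) (b : ι → Bool) : ℝ :=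
  ∏ i, if b i then x i else 1 - x i

theorem sum_bernoulliProd [DecidableEq ι] (x : ι → ℝ) : ∑ b, bernoulliProd x b = 1 := by
  simp [bernoulliProd, Fintype.sum_bool_pi_prod fun i t => if t then x i else 1 - x i]

theorem bernoulliProd_nonneg {x : ι → ℝ} (hx₀ : ∀ i, 0 ≤ x i) (hx₁ : ∀ i, x i ≤ 1)
    (b : ι → Bool) : 0 ≤ bernoulliProd x b :=
  prod_nonneg fun i _ => by split <;> linarith [hx₀ i, hx₁ i]

theorem bernoulliProd_eq_zero_of_eq_zero {x y : ι → ℝ} (hx₀ : ∀ i, 0 ≤ x i)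
    (hxy : ∀ i, x i ≤ y i) (hy₁ : ∀ i, y i < 1) {b : ι → Bool} (hb : bernoulliProd y b = 0) :
    bernoulliProd x b = 0 := by
  obtain ⟨i, -, hi⟩ := prod_eq_zero_iff.1 hb
  refine prod_eq_zero (mem_univ i) ?_
  cases hbi : b i <;> simp only [hbi, if_true, Bool.false_eq_true, if_false] at hi ⊢
  · linarith [hy₁ i]
  · exact le_antisymm (hi ▸ hxy i) (hx₀ i)

theorem sum_sq_div_bernoulliProd [DecidableEq ι] (x y : ι → ℝ) :
    ∑ b, bernoulliProd x b ^ 2 / bernoulliProd y b =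
      ∏ i, (x i ^ 2 / y i + (1 - x i) ^ 2 / (1 - y i)) := by
  convert Fintype.sum_bool_pi_prod
    (fun i t => if t then x i ^ 2 / y i else (1 - x i) ^ 2 / (1 - y i)) using 1
  · refine sum_congr rfl fun b _ => ?_
    simp only [bernoulliProd, ← prod_pow, ← prod_div_distrib]
    exact prod_congr rfl fun i _ => by split <;> rfl
  · simp

end BernoulliProduct

theorem sq_sum_abs_sub_le_sum_sq_div_sub_one {α : Type*} [Fintype α] {p q : α → ℝ}
    (hp : ∑ a, p a = 1) (hq : ∑ a, q a = 1) (hq₀ : ∀ a, 0 ≤ q a)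
    (hpq : ∀ a, q a = 0 → p a = 0) :
    (∑ a, |p a - q a|) ^ 2 ≤ ∑ a, p a ^ 2 / q a - 1 := by
  set s := univ.filter fun a => 0 < q a
  have hoff : ∀ a ∉ s, q a = 0 ∧ p a = 0 := fun a ha => by
    have hqa : q a = 0 := le_antisymm (by simpa [s] using ha) (hq₀ a)
    exact ⟨hqa, hpq a hqa⟩
  have hrestrict : ∀ f : ℝ → ℝ → ℝ, f 0 0 = 0 → ∑ a ∈ s, f (p a) (q a) = ∑ a, f (p a) (q a) :=
    fun f hf => sum_subset (subset_univ s) fun a _ ha => by rw [(hoff a ha).1, (hoff a ha).2, hf]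
  calc (∑ a, |p a - q a|) ^ 2 = (∑ a ∈ s, |p a - q a|) ^ 2 / ∑ a ∈ s, q a := by
        rw [hrestrict (fun u v => |u - v|) (by simp), hrestrict (fun _ v => v) rfl, hq, div_one]
    _ ≤ ∑ a ∈ s, |p a - q a| ^ 2 / q a :=
        sq_sum_div_le_sum_sq_div _ _ fun a ha => (mem_filter.1 ha).2
    _ = ∑ a, (p a ^ 2 / q a - 2 * p a + q a) := by
        rw [hrestrict (fun u v => |u - v| ^ 2 / v) (by simp)]
        refine sum_congr rfl fun a _ => ?_
        rcases eq_or_ne (q a) 0 with h | h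
        · simp [h, hpq a h]
        · rw [sq_abs]
          field_simp
          ring
    _ = ∑ a, p a ^ 2 / q a - 1 := by
        rw [sum_add_distrib, sum_sub_distrib, ← mul_sum, hp, hq]
        ring

theorem sum_weight_mul_sseqRespP {m : ℕ} (ℓ : Fin m → ℕ) (ρ pr : ℝ) (b : Fin m → Bool) :
    ∑ A : Finset (Fin m), pr ^ #A * (1 - pr) ^ (m - #A) * sseqRespP ℓ ρ A b =
      bernoulliProd (fun i => pr * (1 - (1 - ρ) ^ ℓ i)) b := by
  have hweight := pow_card_mul_pow_card_sub_eq_prod (ι := Fin m) pr (1 - pr)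
  simp only [Fintype.card_fin] at hweight
  simp only [hweight, sseqRespP, ← prod_mul_distrib, ite_mul_ite]
  rw [Fintype.sum_finset_prod_ite_mem]
  refine prod_congr rfl fun i _ => ?_
  cases b i <;> simp only [Bool.false_eq_true, if_true, if_false] <;> ring

theorem sseqYesP_eq_sum_bernoulliProd {m : ℕ} (ℓ : Fin m → ℕ) (ρ pr : ℝ)
    (h : (Fin m → Bool) → Bool) :
    sseqYesP m ℓ ρ pr h =
      ∑ b, (if h b then 1 else 0) * bernoulliProd (fun i => pr * (1 - (1 - ρ) ^ ℓ i)) b := by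
  simp only [sseqYesP, mul_sum, ← sum_weight_mul_sseqRespP]
  rw [sum_comm]
  exact sum_congr rfl fun b _ => sum_congr rfl fun A _ => by ring

theorem bernoulli_half_chiSq_le {lam η : ℝ} (hlam₀ : 0 ≤ lam) (hlam₁ : lam ≤ 1) (hη₀ : 0 ≤ η)
    (hη : η ≤ 1 / 4) :
    (lam / 2) ^ 2 / ((1 / 2 + η) * lam) + (1 - lam / 2) ^ 2 / (1 - (1 / 2 + η) * lam) ≤
      1 + 8 * η ^ 2 * lam := by
  rcases hlam₀.eq_or_lt with rfl | hlam
  · norm_num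
  have hy : 0 < (1 / 2 + η) * lam := by positivity
  have hy' : 0 < 1 - (1 / 2 + η) * lam := by nlinarith
  rw [div_add_div _ _ hy.ne' hy'.ne', div_le_iff₀ (by positivity)]
  -- the left side is `1 + η²λ / ((1/2+η)(1-(1/2+η)λ))`, and that denominator is at least `1/8`
  have hden : 1 ≤ 8 * ((1 / 2 + η) * (1 - (1 / 2 + η) * lam)) := by nlinarith
  nlinarith [mul_le_mul_of_nonneg_left hden (sq_nonneg (η * lam))]

theorem one_sub_one_sub_pow_le {ρ : ℝ} (hρ₁ : ρ ≤ 1) (k : ℕ) : 1 - (1 - ρ) ^ k ≤ ρ * k := by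
  nlinarith [one_add_mul_sub_le_pow (a := 1 - ρ) (by linarith) k]

theorem sseqYesP_sub_le {m : ℕ} (ℓ : Fin m → ℕ) (h : (Fin m → Bool) → Bool) {ρ η : ℝ}
    (hρ₀ : 0 ≤ ρ) (hρ₁ : ρ ≤ 1) (hη₀ : 0 ≤ η) (hη : η ≤ 1 / 4) :
    sseqYesP m ℓ ρ (1 / 2) h - sseqYesP m ℓ ρ (1 / 2 + η) h ≤
      √(exp (8 * η ^ 2 * ρ * ∑ i, (ℓ i : ℝ)) - 1) := by
  set lam : Fin m → ℝ := fun i => 1 - (1 - ρ) ^ ℓ i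
  have hlam₀ : ∀ i, 0 ≤ lam i := fun i => sub_nonneg.2 (pow_le_one₀ (by linarith) (by linarith))
  have hlam₁ : ∀ i, lam i ≤ 1 := fun i => sub_le_self 1 (pow_nonneg (by linarith) _)
  set x : Fin m → ℝ := fun i => 1 / 2 * lam i
  set y : Fin m → ℝ := fun i => (1 / 2 + η) * lam i
  have hx₀ : ∀ i, 0 ≤ x i := fun i => by simp only [x]; nlinarith [hlam₀ i]
  have hxy : ∀ i, x i ≤ y i := fun i => by simp only [x, y]; nlinarith [hlam₀ i]
  have hy₁ : ∀ i, y i < 1 := fun i => by simp only [y]; nlinarith [hlam₀ i, hlam₁ i]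
  have hy₀ : ∀ i, 0 ≤ y i := fun i => (hx₀ i).trans (hxy i)
  have hdist : sseqYesP m ℓ ρ (1 / 2) h - sseqYesP m ℓ ρ (1 / 2 + η) h ≤
      ∑ b, |bernoulliProd x b - bernoulliProd y b| := by
    rw [sseqYesP_eq_sum_bernoulliProd, sseqYesP_eq_sum_bernoulliProd, ← sum_sub_distrib]
    refine sum_le_sum fun b _ => ?_
    split
    · simpa only [one_mul] using le_abs_self (bernoulliProd x b - bernoulliProd y b)
    · simp
  have hchiSq : ∏ i, (x i ^ 2 / y i + (1 - x i) ^ 2 / (1 - y i)) ≤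
      exp (8 * η ^ 2 * ρ * ∑ i, (ℓ i : ℝ)) := by
    rw [mul_sum, exp_sum]
    refine prod_le_prod (fun i _ => ?_) fun i _ => ?_
    · have := div_nonneg (sq_nonneg (1 - x i)) (sub_nonneg.2 (hy₁ i).le)
      have := div_nonneg (sq_nonneg (x i)) (hy₀ i)
      positivity
    · calc _ ≤ 1 + 8 * η ^ 2 * lam i := by
            simpa [x, y, div_eq_inv_mul, mul_comm] using
              bernoulli_half_chiSq_le (hlam₀ i) (hlam₁ i) hη₀ hη
        _ ≤ 1 + 8 * η ^ 2 * ρ * ℓ i := by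
            have := one_sub_one_sub_pow_le hρ₁ (ℓ i)
            nlinarith [sq_nonneg η]
        _ ≤ _ := by linarith [add_one_le_exp (8 * η ^ 2 * ρ * ℓ i)]
  refine hdist.trans (le_sqrt_of_sq_le ?_)
  calc _ ≤ ∑ b, bernoulliProd x b ^ 2 / bernoulliProd y b - 1 :=
        sq_sum_abs_sub_le_sum_sq_div_sub_one (sum_bernoulliProd x) (sum_bernoulliProd y)
          (bernoulliProd_nonneg hy₀ fun i => (hy₁ i).le)
          fun b => bernoulliProd_eq_zero_of_eq_zero hx₀ hxy hy₁
    _ ≤ _ := by rw [sum_sq_div_bernoulliProd]; linarith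

theorem logb_two_le_sqrt_div_four {x : ℝ} (hx : 2 ^ 24 ≤ x) : logb 2 x ≤ √x / 4 := by
  have hx₀ : 0 ≤ x := by linarith
  have hs : 2 ^ 12 ≤ √x := (le_sqrt' (by norm_num)).2 (by linarith)
  have ht : 2 ^ 6 ≤ √√x := (le_sqrt' (by norm_num)).2 (by linarith)
  have hlog : log x = 4 * log √√x := by
    rw [log_sqrt (sqrt_nonneg x), log_sqrt hx₀]
    ring
  have hlog_le := log_le_sub_one_of_pos (by linarith : 0 < √√x)
  have hsq : √√x ^ 2 = √x := sq_sqrt (sqrt_nonneg x)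
  rw [logb, div_le_iff₀ (log_pos one_lt_two), hlog]
  nlinarith [log_two_gt_d9]

theorem sseqAdv_le_sqrt {n m : ℕ} (ℓ : Fin m → ℕ) (h : (Fin m → Bool) → Bool) {ε : ℝ}
    (hn : (2 : ℝ) ^ 24 ≤ n) (hε₀ : 0 ≤ ε) (hε₁ : ε ≤ 1) :
    sseqAdv n m ℓ ε h ≤ √(exp (8 * (logb 2 n / √n) ^ 2 * (ε / √n) * ∑ i, (ℓ i : ℝ)) - 1) :=
  have hs : 1 ≤ √n := one_le_sqrt.2 (by linarith)
  sseqYesP_sub_le ℓ h (div_nonneg hε₀ (by linarith)) ((div_le_one (by linarith)).2 (by linarith))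
    (div_nonneg (logb_nonneg one_lt_two (by linarith)) (by linarith))
    ((div_le_iff₀ (by linarith)).2 (by linarith [logb_two_le_sqrt_div_four hn]))

theorem chiSq_exponent_le {x ε S : ℝ} (hx : 2 ^ 24 ≤ x) (hε₀ : 0 < ε) (hε₁ : ε ≤ 1)
    (hS : S ≤ x ^ ((3 : ℝ) / 2) / (ε * logb 2 x ^ 3 * logb 2 (x / ε) ^ 2)) :
    8 * (logb 2 x / √x) ^ 2 * (ε / √x) * S ≤ 1 / 8 := by
  have hL : 24 ≤ logb 2 x :=
    (le_logb_iff_rpow_le one_lt_two (by positivity)).2 (by norm_num; linarith)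
  have hLL : logb 2 x ≤ logb 2 (x / ε) :=
    logb_le_logb_of_le one_lt_two (by positivity) (le_div_self (by positivity) hε₀ hε₁)
  have hx32 : x ^ ((3 : ℝ) / 2) = √x ^ 3 := by
    rw [sqrt_eq_rpow, ← rpow_natCast, ← rpow_mul (by positivity)]
    norm_num
  calc _ ≤ 8 * (logb 2 x / √x) ^ 2 * (ε / √x) *
        (x ^ ((3 : ℝ) / 2) / (ε * logb 2 x ^ 3 * logb 2 (x / ε) ^ 2)) := by gcongr
    _ = 8 / (logb 2 x * logb 2 (x / ε) ^ 2) := by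
        rw [hx32]
        field_simp
    _ ≤ 1 / 8 := by
        rw [div_le_div_iff₀ (mul_pos (by linarith) (pow_pos (by linarith) 2)) (by norm_num)]
        nlinarith

theorem sqrt_exp_sub_one_le_half {x : ℝ} (hx : x ≤ 1 / 8) : √(exp x - 1) ≤ 1 / 2 := by
  have h : exp (1 / 8) - 1 ≤ 1 / 4 :=
    (le_abs_self _).trans ((abs_exp_sub_one_le (by norm_num [abs_of_pos])).trans (by norm_num))
  calc √(exp x - 1) ≤ √((1 / 2) ^ 2) := sqrt_le_sqrt (by linarith [exp_le_exp.2 hx])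
    _ = 1 / 2 := sqrt_sq (by norm_num)

theorem stmt12_general (α : ℝ) :
    ∃ n₀ : ℕ, ∀ (n : ℕ) (ε : ℝ), n₀ ≤ n →
      (2 : ℝ) ^ (-((2 * α - 1) * (n : ℝ) / 2)) ≤ ε → ε ≤ 1 / 6 →
      ∀ m : ℕ, m = ⌈2 * (1 - α) * (n : ℝ) + (1 - α) * Real.sqrt n * Real.logb 2 n⌉₊ →
      ∀ (ℓ : Fin m → ℕ) (h : (Fin m → Bool) → Bool),
        2 / 3 ≤ sseqAdv n m ℓ ε h →
        (n : ℝ) ^ ((3 : ℝ) / 2) /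
            (ε * (Real.logb 2 n) ^ 3 * (Real.logb 2 ((n : ℝ) / ε)) ^ 2) <
          (∑ i : Fin m, (ℓ i : ℝ)) := by
  refine ⟨2 ^ 24, fun n ε hn hε_lower hε_upper m _ ℓ h hadv => ?_⟩
  have hε : 0 < ε := (rpow_pos_of_pos two_pos _).trans_le hε_lower
  have hn' : (2 : ℝ) ^ 24 ≤ n := by exact_mod_cast hn
  by_contra! hS
  have hadv_le := (sseqAdv_le_sqrt ℓ h hn' hε.le (by linarith)).trans
    (sqrt_exp_sub_one_le_half (chiSq_exponent_le hn' hε (by linarith) hS))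
  linarith

theorem stmt12 (α : ℝ) (hα₁ : 1 / 2 < α) (hα₂ : α < 1) :
    ∃ n₀ : ℕ, ∀ (n : ℕ) (ε : ℝ), n₀ ≤ n →
      (2 : ℝ) ^ (-((2 * α - 1) * (n : ℝ) / 2)) ≤ ε → ε ≤ 1 / 6 →
      ∀ m : ℕ, m = ⌈2 * (1 - α) * (n : ℝ) + (1 - α) * Real.sqrt n * Real.logb 2 n⌉₊ →
      ∀ (ℓ : Fin m → ℕ) (h : (Fin m → Bool) → Bool),
        2 / 3 ≤ sseqAdv n m ℓ ε h →
        (n : ℝ) ^ ((3 : ℝ) / 2) /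
            (ε * (Real.logb 2 n) ^ 3 * (Real.logb 2 ((n : ℝ) / ε)) ^ 2) <
          (∑ i : Fin m, (ℓ i : ℝ)) :=
  stmt12_general α
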